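/- arXiv:2605.17806 — 6 statements merged into one kernel-verified Lean document; each statement's English description precedes it below -/
import Mathlib

section
/- Let E : Fin n → ℤ → ℝ be a family of functions, let k_min ≤ k_max be integers, and let T : Fin n → ℤ be a feasible allocation (i.e., k_min ≤ T i ≤ k_max for all i). Suppose there exist indices i, j with T i < k_max and T j > k_min such that E i (T i) - E i (T i + 1) > E j (T j - 1) - E j (T j). Then the allocation T' defined by T' i = T i + 1, T' j = T j - 1, and T' l = T l for l ∉ {i, j} (with i ≠ j) is feasible, satisfies ∑ l, T' l = ∑ l, T l, and has strictly smaller objective: ∑ l, E l (T' l) < ∑ l, E l (T l). -/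
open Finset

theorem Fintype.sum_sub_sum_eq_of_eqOn_compl_pair {ι M : Type*} [Fintype ι] [DecidableEq ι]
    [AddCommGroup M] {f g : ι → M} {i j : ι} (hij : i ≠ j)
    (h : ∀ l, l ≠ i → l ≠ j → f l = g l) :
    ∑ l, f l - ∑ l, g l = (f i - g i) + (f j - g j) := by
  rw [← sum_sub_distrib]
  exact Fintype.sum_eq_add i j hij fun l hl => sub_eq_zero.mpr (h l hl.1 hl.2)

theorem unit_transfer_feasible {ι : Type*} {kmin kmax : ℤ} {T T' : ι → ℤ}
    (hfeas : ∀ l, kmin ≤ T l ∧ T l ≤ kmax) {i j : ι} (hi : T i < kmax) (hj : kmin < T j)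
    (hT'i : T' i = T i + 1) (hT'j : T' j = T j - 1)
    (hT'l : ∀ l, l ≠ i → l ≠ j → T' l = T l) (l : ι) :
    kmin ≤ T' l ∧ T' l ≤ kmax := by
  by_cases hli : l = i
  · subst hli
    have := hfeas l
    omega
  by_cases hlj : l = j
  · subst hlj
    have := hfeas l
    omega
  rw [hT'l l hli hlj]
  exact hfeas l

theorem stmt0_general {n : ℕ} (E : Fin n → ℤ → ℝ) (kmin kmax : ℤ)
    (T : Fin n → ℤ) (hfeas : ∀ l, kmin ≤ T l ∧ T l ≤ kmax)
    (i j : Fin n) (hij : i ≠ j) (hi : T i < kmax) (hj : kmin < T j)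
    (hgain : E i (T i) - E i (T i + 1) > E j (T j - 1) - E j (T j))
    (T' : Fin n → ℤ)
    (hT'i : T' i = T i + 1) (hT'j : T' j = T j - 1)
    (hT'l : ∀ l, l ≠ i → l ≠ j → T' l = T l) :
    (∀ l, kmin ≤ T' l ∧ T' l ≤ kmax) ∧
    (∑ l, T' l = ∑ l, T l) ∧
    (∑ l, E l (T' l) < ∑ l, E l (T l)) := by
  refine ⟨unit_transfer_feasible hfeas hi hj hT'i hT'j hT'l, ?_, ?_⟩
  · have hdiff := Fintype.sum_sub_sum_eq_of_eqOn_compl_pair hij hT'l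
    rw [hT'i, hT'j] at hdiff
    linarith
  · have hdiff := Fintype.sum_sub_sum_eq_of_eqOn_compl_pair (f := fun l => E l (T' l))
      (g := fun l => E l (T l)) hij fun l hli hlj => by rw [hT'l l hli hlj]
    simp only [hT'i, hT'j] at hdiff
    linarith

/-- A strictly-improving single-unit transfer preserves feasibility and the total
budget, and strictly decreases the objective. -/
theorem stmt0 {n : ℕ} (E : Fin n → ℤ → ℝ) (kmin kmax : ℤ) (hk : kmin ≤ kmax)
    (T : Fin n → ℤ) (hfeas : ∀ l, kmin ≤ T l ∧ T l ≤ kmax)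
    (i j : Fin n) (hij : i ≠ j) (hi : T i < kmax) (hj : kmin < T j)
    (hgain : E i (T i) - E i (T i + 1) > E j (T j - 1) - E j (T j))
    (T' : Fin n → ℤ)
    (hT'i : T' i = T i + 1) (hT'j : T' j = T j - 1)
    (hT'l : ∀ l, l ≠ i → l ≠ j → T' l = T l) :
    (∀ l, kmin ≤ T' l ∧ T' l ≤ kmax) ∧
    (∑ l, T' l = ∑ l, T l) ∧
    (∑ l, E l (T' l) < ∑ l, E l (T l)) :=
  stmt0_general E kmin kmax T hfeas i j hij hi hj hgain T' hT'i hT'j hT'l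
end

section
/- (Optimality condition is necessary.) Let E : Fin n → ℤ → ℝ and let T be a feasible allocation (k_min ≤ T i ≤ k_max for all i, ∑ i T i = B) minimizing ∑ i, E i (T i) over all feasible allocations. Then for every pair (i, j) with T i < k_max and T j > k_min, the condition E i (T i) - E i (T i + 1) ≤ E j (T j - 1) - E j (T j) holds. -/
/-- Necessity of the exchange-optimality condition: at a global minimizer, the
marginal gain of any feasible increment is at most the marginal loss of any
feasible decrement. -/
theorem stmt7 {n : ℕ} (E : Fin n → ℤ → ℝ) (kmin kmax B : ℤ)
    (T : Fin n → ℤ) (hbox : ∀ i, kmin ≤ T i ∧ T i ≤ kmax) (hsum : ∑ i, T i = B)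
    (hmin : ∀ T' : Fin n → ℤ, (∀ i, kmin ≤ T' i ∧ T' i ≤ kmax) → ∑ i, T' i = B →
      ∑ i, E i (T i) ≤ ∑ i, E i (T' i)) :
    ∀ i j : Fin n, i ≠ j → T i < kmax → kmin < T j →
      E i (T i) - E i (T i + 1) ≤ E j (T j - 1) - E j (T j) := by
  intro i j hij hik hjk
  set T' : Fin n → ℤ := Function.update (Function.update T i (T i + 1)) j (T j - 1) with hT'
  have hT'i : T' i = T i + 1 := by
    simp [hT', Function.update_of_ne hij, Function.update_self]
  have hT'j : T' j = T j - 1 := by simp [hT']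
  have hT'k : ∀ k, k ≠ i → k ≠ j → T' k = T k := by
    intro k hki hkj
    simp [hT', Function.update_of_ne hkj, Function.update_of_ne hki]
  have hbox' : ∀ k, kmin ≤ T' k ∧ T' k ≤ kmax := by
    intro k
    have hk := hbox k
    by_cases hkj : k = j
    · subst hkj; rw [hT'j]; omega
    by_cases hki : k = i
    · subst hki; rw [hT'i]; omega
    · rw [hT'k k hki hkj]; exact hk
  have hsplitZ : ∀ f : Fin n → ℤ, ∑ k, f k =
      f i + f j + ∑ x ∈ ({i, j} : Finset (Fin n))ᶜ, f x := by
    intro f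
    rw [← Finset.sum_compl_add_sum ({i, j} : Finset (Fin n)) f,
      Finset.sum_pair hij]
    ring
  have hsplit : ∀ f : Fin n → ℤ, ∑ k, E k (f k) =
      E i (f i) + E j (f j) + ∑ x ∈ ({i, j} : Finset (Fin n))ᶜ, E x (f x) := by
    intro f
    rw [← Finset.sum_compl_add_sum ({i, j} : Finset (Fin n)) (fun k => E k (f k)),
      Finset.sum_pair hij]
    ring
  have houter : ∀ x ∈ ({i, j} : Finset (Fin n))ᶜ, T' x = T x := by
    intro x hx
    simp only [Finset.mem_compl, Finset.mem_insert, Finset.mem_singleton, not_or] at hx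
    exact hT'k x hx.1 hx.2
  have hsum' : ∑ k, T' k = B := by
    rw [hsplitZ T', hT'i, hT'j, Finset.sum_congr rfl houter, ← hsum, hsplitZ T]
    ring
  have key := hmin T' hbox' hsum'
  rw [hsplit T, hsplit T'] at key
  have heq : ∑ x ∈ ({i, j} : Finset (Fin n))ᶜ, E x (T' x) =
      ∑ x ∈ ({i, j} : Finset (Fin n))ᶜ, E x (T x) :=
    Finset.sum_congr rfl fun x hx => by rw [houter x hx]
  rw [heq, hT'i, hT'j] at key
  linarith
end

section
/- (Optimality condition is sufficient under discrete convexity.) Let E : Fin n → ℤ → ℝ be such that each E i is discretely convex on [k_min, k_max] (i.e., the marginal gain ΔE_i(k) := E i k - E i (k+1) is non-increasing in k). Let T be a feasible allocation (k_min ≤ T i ≤ k_max, ∑ i T i = B) satisfying: for all pairs (i, j) with T i < k_max and T j > k_min, ΔE_i(T i) ≤ ΔE_j(T j - 1). Then T is a global minimizer of ∑ i, E i (T i) over all feasible allocations with the same budget B. -/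
/-- Split a sum over `Fin n` into the terms at `i`, `j` and the rest. -/
lemma stmt8_pairsplit {n : ℕ} {M : Type*} [AddCommMonoid M] (i j : Fin n)
    (hij : j ≠ i) (f : Fin n → M) :
    ∑ k, f k = f i + (f j + ∑ k ∈ (Finset.univ.erase i).erase j, f k) := by
  rw [Finset.add_sum_erase _ f (Finset.mem_erase.mpr ⟨hij, Finset.mem_univ j⟩),
      Finset.add_sum_erase _ f (Finset.mem_univ i)]

/-- Sufficiency of the exchange-optimality condition under discrete convexity:
a feasible allocation satisfying the condition is a global minimizer. -/
theorem stmt8 {n : ℕ} (E : Fin n → ℤ → ℝ) (kmin kmax B : ℤ)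
    (hconv : ∀ i : Fin n, ∀ k : ℤ, kmin < k → k < kmax →
      E i (k + 1) + E i (k - 1) ≥ 2 * E i k)
    (T : Fin n → ℤ) (hbox : ∀ i, kmin ≤ T i ∧ T i ≤ kmax) (hsum : ∑ i, T i = B)
    (hstar : ∀ i j : Fin n, T i < kmax → kmin < T j →
      E i (T i) - E i (T i + 1) ≤ E j (T j - 1) - E j (T j)) :
    ∀ T' : Fin n → ℤ, (∀ i, kmin ≤ T' i ∧ T' i ≤ kmax) → ∑ i, T' i = B →
      ∑ i, E i (T i) ≤ ∑ i, E i (T' i) := by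
  -- monotonicity of marginal gains
  have hmono : ∀ i : Fin n, ∀ a b : ℤ, kmin ≤ a → a ≤ b → b < kmax →
      E i b - E i (b + 1) ≤ E i a - E i (a + 1) := by
    intro i a b ha hab hb
    have key : ∀ d : ℕ, ∀ a : ℤ, kmin ≤ a → a + d < kmax →
        E i (a + d) - E i (a + d + 1) ≤ E i a - E i (a + 1) := by
      intro d
      induction d with
      | zero => intro a _ _; simp
      | succ d ihd =>
        intro a ha h
        push_cast at h ⊢
        have ih' := ihd a ha (by omega)
        have hc := hconv i (a + d + 1) (by omega) (by omega)
        have heq : a + (d : ℤ) + 1 - 1 = a + d := by ring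
        rw [heq] at hc
        have h2 : E i (a + d + 1) - E i (a + d + 1 + 1) ≤
            E i (a + d) - E i (a + d + 1) := by linarith
        have hre : a + ((d : ℤ) + 1) = a + d + 1 := by ring
        rw [hre]
        calc E i (a + d + 1) - E i (a + d + 1 + 1)
            ≤ E i (a + d) - E i (a + d + 1) := h2
          _ ≤ E i a - E i (a + 1) := ih'
    have hd : a + ((b - a).toNat : ℤ) = b := by omega
    have := key (b - a).toNat a ha (by omega)
    rw [hd] at this
    exact this
  suffices H : ∀ N : ℕ, ∀ T' : Fin n → ℤ,
      (∀ i, kmin ≤ T' i ∧ T' i ≤ kmax) → ∑ i, T' i = B →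
      (∑ i, (T' i - T i).natAbs) ≤ N →
      ∑ i, E i (T i) ≤ ∑ i, E i (T' i) by
    intro T' h1 h2
    exact H _ T' h1 h2 le_rfl
  intro N
  induction N with
  | zero =>
    intro T' _ _ hm
    have hz : ∀ k ∈ Finset.univ, (fun k => (T' k - T k).natAbs) k = 0 := by
      rw [← Finset.sum_eq_zero_iff]
      omega
    refine le_of_eq (Finset.sum_congr rfl fun k _ => ?_)
    have := hz k (Finset.mem_univ k)
    simp only at this
    have : T k = T' k := by omega
    rw [this]
  | succ N ihN =>
    intro T' hb' hs' hm
    by_cases hcase : ∑ i, (T' i - T i).natAbs ≤ N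
    · exact ihN T' hb' hs' hcase
    have hpos : 0 < ∑ i, (T' i - T i).natAbs := by omega
    -- find i with T i < T' i
    have hexk : ∃ k, (T' k - T k).natAbs ≠ 0 := by
      by_contra hall
      push_neg at hall
      have : ∑ k, (T' k - T k).natAbs = 0 := Finset.sum_eq_zero fun k _ => hall k
      omega
    have hex_i : ∃ i, T i < T' i := by
      by_contra hno
      push_neg at hno
      obtain ⟨k, hk⟩ := hexk
      have : ∑ x, T' x < ∑ x, T x :=
        Finset.sum_lt_sum (fun x _ => by
          have := hno x; omega) ⟨k, Finset.mem_univ k, by have := hno k; omega⟩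
      omega
    obtain ⟨i, hi⟩ := hex_i
    have hex_j : ∃ j, T' j < T j := by
      by_contra hno
      push_neg at hno
      have : ∑ x, T x < ∑ x, T' x :=
        Finset.sum_lt_sum (fun x _ => hno x) ⟨i, Finset.mem_univ i, hi⟩
      omega
    obtain ⟨j, hj⟩ := hex_j
    have hij : j ≠ i := by intro h; subst h; omega
    -- the one-unit transfer
    set T'' : Fin n → ℤ := fun k => if k = i then T' i - 1 else
      if k = j then T' j + 1 else T' k with hT''
    have hT''i : T'' i = T' i - 1 := by simp [hT'']
    have hT''j : T'' j = T' j + 1 := by simp [hT'', hij]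
    have hT''other : ∀ k, k ≠ i → k ≠ j → T'' k = T' k := by
      intro k h1 h2; simp [hT'', h1, h2]
    have hrest : ∀ (f : Fin n → ℤ → ℝ),
        ∑ k ∈ (Finset.univ.erase i).erase j, f k (T'' k)
          = ∑ k ∈ (Finset.univ.erase i).erase j, f k (T' k) := by
      intro f
      refine Finset.sum_congr rfl fun k hk => ?_
      have h2 := Finset.mem_erase.mp hk
      have h1 := Finset.mem_erase.mp h2.2
      rw [hT''other k h1.1 h2.1]
    -- box for T''
    have hbox'' : ∀ k, kmin ≤ T'' k ∧ T'' k ≤ kmax := by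
      intro k
      by_cases h1 : k = i
      · subst h1; rw [hT''i]
        have := hbox k; have := hb' k; omega
      by_cases h2 : k = j
      · subst h2; rw [hT''j]
        have := hbox k; have := hb' k; omega
      · rw [hT''other k h1 h2]; exact hb' k
    -- sum for T''
    have hsum'' : ∑ k, T'' k = B := by
      have e1 := stmt8_pairsplit i j hij T''
      have e2 := stmt8_pairsplit i j hij T'
      have e3 : ∑ k ∈ (Finset.univ.erase i).erase j, T'' k
          = ∑ k ∈ (Finset.univ.erase i).erase j, T' k := by
        refine Finset.sum_congr rfl fun k hk => ?_
        have h2 := Finset.mem_erase.mp hk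
        have h1 := Finset.mem_erase.mp h2.2
        rw [hT''other k h1.1 h2.1]
      rw [e1, hT''i, hT''j, e3]
      rw [e2] at hs'
      omega
    -- measure decreases
    have hmeas : ∑ k, (T'' k - T k).natAbs ≤ N := by
      have e1 := stmt8_pairsplit i j hij (fun k => (T'' k - T k).natAbs)
      have e2 := stmt8_pairsplit i j hij (fun k => (T' k - T k).natAbs)
      have e3 : ∑ k ∈ (Finset.univ.erase i).erase j, (T'' k - T k).natAbs
          = ∑ k ∈ (Finset.univ.erase i).erase j, (T' k - T k).natAbs := by
        refine Finset.sum_congr rfl fun k hk => ?_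
        have h2 := Finset.mem_erase.mp hk
        have h1 := Finset.mem_erase.mp h2.2
        rw [hT''other k h1.1 h2.1]
      rw [e1, hT''i, hT''j, e3]
      rw [e2] at hm
      have hai : (T' i - 1 - T i).natAbs + 1 = (T' i - T i).natAbs := by omega
      have haj : (T' j + 1 - T j).natAbs + 1 = (T' j - T j).natAbs := by omega
      omega
    -- energy does not increase
    have henergy : ∑ k, E k (T'' k) ≤ ∑ k, E k (T' k) := by
      have e1 := stmt8_pairsplit i j hij (fun k => E k (T'' k))
      have e2 := stmt8_pairsplit i j hij (fun k => E k (T' k))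
      rw [e1, e2, hT''i, hT''j, hrest E]
      have hbi := hbox i; have hbj := hbox j
      have hbi' := hb' i; have hbj' := hb' j
      -- Δ_i(T' i - 1) ≤ Δ_i(T i)
      have m1 : E i (T' i - 1) - E i (T' i - 1 + 1) ≤ E i (T i) - E i (T i + 1) :=
        hmono i (T i) (T' i - 1) hbi.1 (by omega) (by omega)
      -- Δ_i(T i) ≤ Δ_j(T j - 1)
      have m2 : E i (T i) - E i (T i + 1) ≤ E j (T j - 1) - E j (T j) :=
        hstar i j (by omega) (by omega)
      -- Δ_j(T j - 1) ≤ Δ_j(T' j)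
      have m3 : E j (T j - 1) - E j (T j - 1 + 1) ≤ E j (T' j) - E j (T' j + 1) :=
        hmono j (T' j) (T j - 1) hbj'.1 (by omega) (by omega)
      have eqi : T' i - 1 + 1 = T' i := by ring
      have eqj : T j - 1 + 1 = T j := by ring
      rw [eqi] at m1
      rw [eqj] at m3
      linarith
    calc ∑ k, E k (T k) ≤ ∑ k, E k (T'' k) := ihN T'' hbox'' hsum'' hmeas
      _ ≤ ∑ k, E k (T' k) := henergy
end

section
/- Let E : Fin n → ℤ → ℝ with each E i discretely convex on [k_min, k_max]. Suppose T is a feasible allocation satisfying the stationarity condition (⋆): ΔE_i(T i) ≤ ΔE_j(T j - 1) for all i with T i < k_max and j with T j > k_min. Let T' be any feasible allocation with the same budget, and consider any single-unit transfer along a monotone path from T to T': i.e., a transfer from j to i applied at an intermediate allocation S where i satisfies T i ≤ S i < T' i and j satisfies T' j < S j ≤ T j. Then this transfer does not decrease the objective: E i (S i + 1) - E i (S i) + E j (S j - 1) - E j (S j) ≥ 0. -/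
/-- Increments of a discretely convex function are nondecreasing. -/
lemma inc_mono (f : ℤ → ℝ) (kmin kmax : ℤ)
    (h : ∀ k : ℤ, kmin < k → k < kmax → f (k + 1) + f (k - 1) ≥ 2 * f k) :
    ∀ m : ℕ, ∀ a : ℤ, kmin ≤ a → a + m < kmax →
      f (a + 1) - f a ≤ f (a + m + 1) - f (a + m) := by
  intro m
  induction m with
  | zero => intro a _ _; simp
  | succ m ih =>
    intro a ha hb
    have hb' : a + m < kmax := by push_cast at hb ⊢; omega
    have h1 := ih a ha hb'
    have h2 := h (a + m + 1) (by omega) (by push_cast at hb; omega)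
    have e : (a : ℤ) + (m + 1 : ℕ) = a + m + 1 := by push_cast; ring
    rw [e]
    have : f (a + m + 1 + 1) + f (a + m + 1 - 1) ≥ 2 * f (a + m + 1) := h2
    have e2 : (a : ℤ) + m + 1 - 1 = a + m := by ring
    rw [e2] at this
    linarith

/-- A single-unit transfer along a monotone path from a stationary allocation T
to any feasible allocation T' with the same budget does not decrease the
objective. -/
theorem stmt9 {n : ℕ} (E : Fin n → ℤ → ℝ) (kmin kmax : ℤ)
    (hconv : ∀ i : Fin n, ∀ k : ℤ, kmin < k → k < kmax →
      E i (k + 1) + E i (k - 1) ≥ 2 * E i k)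
    (T T' S : Fin n → ℤ)
    (hTbox : ∀ i, kmin ≤ T i ∧ T i ≤ kmax)
    (hT'box : ∀ i, kmin ≤ T' i ∧ T' i ≤ kmax)
    (hbudget : ∑ i, T i = ∑ i, T' i)
    (hstar : ∀ i j : Fin n, T i < kmax → kmin < T j →
      E i (T i) - E i (T i + 1) ≤ E j (T j - 1) - E j (T j))
    (i j : Fin n)
    (hi1 : T i ≤ S i) (hi2 : S i < T' i)
    (hj1 : T' j < S j) (hj2 : S j ≤ T j) :
    E i (S i + 1) - E i (S i) + (E j (S j - 1) - E j (S j)) ≥ 0 := by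
  have hTi_lt : T i < kmax := by have := (hT'box i).2; omega
  have hTj_gt : kmin < T j := by have := (hT'box j).1; omega
  -- increment of i at T i ≤ increment of i at S i
  have hbi := (hT'box i).2
  have hbj := (hT'box j).1
  have hbt := (hTbox j).2
  have hi_mono : E i (T i + 1) - E i (T i) ≤ E i (S i + 1) - E i (S i) := by
    have := inc_mono (E i) kmin kmax (hconv i) (S i - T i).toNat (T i) (hTbox i).1
      (by rw [Int.toNat_of_nonneg (by omega)]; omega)
    rwa [Int.toNat_of_nonneg (by omega : (0:ℤ) ≤ S i - T i), show T i + (S i - T i) = S i by ring] at this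
  -- increment of j at S j - 1 ≤ increment of j at T j - 1
  have hj_mono : E j (S j) - E j (S j - 1) ≤ E j (T j) - E j (T j - 1) := by
    have := inc_mono (E j) kmin kmax (hconv j) (T j - S j).toNat (S j - 1)
      (by omega) (by rw [Int.toNat_of_nonneg (by omega)]; omega)
    rw [Int.toNat_of_nonneg (by omega : (0:ℤ) ≤ T j - S j)] at this
    have e1 : S j - 1 + 1 = S j := by ring
    have e2 : S j - 1 + (T j - S j) + 1 = T j := by ring
    have e3 : S j - 1 + (T j - S j) = T j - 1 := by ring
    rw [e1, e2, e3] at this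
    exact this
  have hs := hstar i j hTi_lt hTj_gt
  linarith
end

section
/- (Full optimality of greedy budget allocation.) Let n ≥ 1, integers k_min ≤ k_max, and budget B with n·k_min ≤ B ≤ n·k_max. Let E : Fin n → ℤ → ℝ be such that each E i is strictly decreasing and discretely convex on [k_min, k_max]. Then any feasible allocation T (k_min ≤ T i ≤ k_max, ∑ i T i = B) satisfying ΔE_i(T i) ≤ ΔE_j(T j - 1) for all valid pairs (i with T i < k_max, j with T j > k_min) is a global minimizer of ∑ i, E i (T i) over the feasible set; moreover such an allocation exists. -/
/-!
If `T` satisfies the exchange condition, every marginal gain `E i (T i) - E i (T i + 1)` that can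
still be taken is at most every marginal loss `E j (T j - 1) - E j (T j)` that can still be given
up, so some `c` lies between them. Then `T i` is a local, hence (by discrete convexity) global,
minimiser of `x ↦ E i x + c * x` on `[kmin, kmax]`; summing over `i`, the terms `c * ∑ T i` cancel
for allocations with the same budget. A minimiser over the finite nonempty feasible set satisfies
the exchange condition, since a unit transfer from `j` to `i` cannot decrease the total.
-/

open Finset Function

def DiscreteConvexOn (a b : ℤ) (f : ℤ → ℝ) : Prop :=
  ∀ k : ℤ, a < k → k < b → 2 * f k ≤ f (k + 1) + f (k - 1)

namespace DiscreteConvexOn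

variable {a b : ℤ} {f : ℤ → ℝ}

theorem sub_add_one_antitone (hf : DiscreteConvexOn a b f) {k l : ℤ} (hk : a ≤ k) (hkl : k ≤ l)
    (hl : l < b) : f l - f (l + 1) ≤ f k - f (k + 1) := by
  induction l, hkl using Int.leInduction with
  | base => rfl
  | succ l hkl ih =>
    have := hf (l + 1) (by omega) hl
    rw [add_sub_cancel_right] at this
    linarith [ih (by omega)]

theorem add_linear (hf : DiscreteConvexOn a b f) (c : ℝ) :
    DiscreteConvexOn a b (fun x => f x + c * x) := by
  intro k hak hkb
  have := hf k hak hkb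
  push_cast
  linarith

theorem le_of_le_add_one_of_le_sub_one (hf : DiscreteConvexOn a b f) {t : ℤ} (hat : a ≤ t)
    (htb : t ≤ b) (hup : t < b → f t ≤ f (t + 1)) (hdown : a < t → f t ≤ f (t - 1))
    {x : ℤ} (hax : a ≤ x) (hxb : x ≤ b) : f t ≤ f x := by
  rcases le_total t x with htx | hxt
  · induction x, htx using Int.leInduction with
    | base => rfl
    | succ x htx ih =>
      have := hf.sub_add_one_antitone hat htx (by omega)
      linarith [ih (by omega) (by omega), hup (by omega)]
  · induction x, hxt using Int.leInductionDown with
    | base => rfl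
    | pred x hxt ih =>
      have := hf.sub_add_one_antitone hax (by omega : x - 1 ≤ t - 1) (by omega)
      rw [sub_add_cancel, sub_add_cancel] at this
      linarith [ih (by omega) (by omega), hdown (by omega)]

end DiscreteConvexOn

theorem exists_forall_le_and_le_forall {ι : Type*} [Finite ι] {p q : ι → Prop} {u v : ι → ℝ}
    (h : ∀ i j, p i → q j → u i ≤ v j) :
    ∃ c : ℝ, (∀ i, p i → u i ≤ c) ∧ ∀ j, q j → c ≤ v j := by
  by_cases hp : ∃ i, p i
  · obtain ⟨i₀, hi₀⟩ := hp
    have : Nonempty {i // p i} := ⟨⟨i₀, hi₀⟩⟩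
    refine ⟨⨆ i : {i // p i}, u i, fun i hi => ?_, fun j hj => ?_⟩
    · exact le_ciSup (f := fun i : {i // p i} => u i) (Finite.bddAbove_range _) ⟨i, hi⟩
    · exact ciSup_le fun i => h i j i.2 hj
  · push Not at hp
    refine ⟨⨅ j : {j // q j}, v j, fun i hi => absurd hi (hp i), fun j hj => ?_⟩
    exact ciInf_le (f := fun j : {j // q j} => v j) (Finite.bddBelow_range _) ⟨j, hj⟩

theorem sum_update_update {ι M : Type*} [Fintype ι] [DecidableEq ι] [AddCommGroup M]
    (φ : ι → ℤ → M) (T : ι → ℤ) {i j : ι} (hij : i ≠ j) (x y : ℤ) :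
    ∑ k, φ k (update (update T i x) j y k)
      = ∑ k, φ k (T k) + (φ i x - φ i (T i)) + (φ j y - φ j (T j)) := by
  have hdiff : ∑ k, (φ k (update (update T i x) j y k) - φ k (T k))
      = (φ i x - φ i (T i)) + (φ j y - φ j (T j)) := by
    rw [Fintype.sum_eq_add i j hij fun k hk => by simp [hk.1, hk.2]]
    simp [hij]
  rw [Finset.sum_sub_distrib] at hdiff
  rw [add_assoc, ← hdiff, add_sub_cancel]

theorem exists_fin_sum_eq_of_mul_le_of_le_mul {a b : ℤ} {n : ℕ} {B : ℤ} (h₁ : n * a ≤ B)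
    (h₂ : B ≤ n * b) : ∃ T : Fin n → ℤ, (∀ i, a ≤ T i ∧ T i ≤ b) ∧ ∑ i, T i = B := by
  induction n generalizing B with
  | zero => exact ⟨Fin.elim0, fun i => i.elim0, by simp at h₁ h₂ ⊢; omega⟩
  | succ n ih =>
    rw [Nat.cast_succ, add_one_mul] at h₁ h₂
    have hab : a ≤ b := by nlinarith [n.cast_nonneg (α := ℤ)]
    have hnab : (n : ℤ) * a ≤ n * b := by gcongr
    obtain ⟨T, hT, hsum⟩ := ih (B := B - max a (B - n * b)) (by omega) (by omega)
    refine ⟨Fin.cons (max a (B - n * b)) T, Fin.cases ?head hT, ?sum⟩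
    case head =>
      simp only [Fin.cons_zero]
      omega
    case sum =>
      simp only [Fin.sum_univ_succ, Fin.cons_zero, Fin.cons_succ, hsum]
      omega

def ExchangeOptimal {ι : Type*} (a b : ℤ) (E : ι → ℤ → ℝ) (T : ι → ℤ) : Prop :=
  ∀ i j, T i < b → a < T j → E i (T i) - E i (T i + 1) ≤ E j (T j - 1) - E j (T j)

variable {ι : Type*} [Fintype ι] {a b : ℤ} {E : ι → ℤ → ℝ}

theorem ExchangeOptimal.sum_le_sum {T T' : ι → ℤ} (hex : ExchangeOptimal a b E T)
    (hE : ∀ i, DiscreteConvexOn a b (E i))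
    (hT : ∀ i, a ≤ T i ∧ T i ≤ b) (hT' : ∀ i, a ≤ T' i ∧ T' i ≤ b)
    (hsum : ∑ i, T i = ∑ i, T' i) :
    ∑ i, E i (T i) ≤ ∑ i, E i (T' i) := by
  obtain ⟨c, hcu, hcv⟩ := exists_forall_le_and_le_forall hex
  have hlocal : ∀ i, E i (T i) + c * T i ≤ E i (T' i) + c * T' i := fun i =>
    (hE i).add_linear c |>.le_of_le_add_one_of_le_sub_one (hT i).1 (hT i).2
      (fun h => by push_cast; linarith [hcu i h]) (fun h => by push_cast; linarith [hcv i h])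
      (hT' i).1 (hT' i).2
  have hsumR : ∑ i, (T i : ℝ) = ∑ i, (T' i : ℝ) := by exact_mod_cast hsum
  have := Finset.sum_le_sum fun i (_ : i ∈ univ) => hlocal i
  rw [sum_add_distrib, sum_add_distrib, ← mul_sum, ← mul_sum, hsumR] at this
  linarith

theorem exchangeOptimal_of_minimal [DecidableEq ι] (hE : ∀ i, DiscreteConvexOn a b (E i))
    {T : ι → ℤ} (hT : ∀ i, a ≤ T i ∧ T i ≤ b)
    (hmin : ∀ T' : ι → ℤ, (∀ i, a ≤ T' i ∧ T' i ≤ b) → ∑ i, T' i = ∑ i, T i →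
      ∑ i, E i (T i) ≤ ∑ i, E i (T' i)) :
    ExchangeOptimal a b E T := by
  intro i j hi hj
  rcases eq_or_ne i j with rfl | hij
  · linarith [hE i (T i) hj hi]
  · have hfeas : ∀ k, a ≤ update (update T i (T i + 1)) j (T j - 1) k ∧
        update (update T i (T i + 1)) j (T j - 1) k ≤ b := by
      intro k
      have := hT k
      rcases eq_or_ne k j with rfl | hkj
      · simp only [update_self]
        omega
      · rcases eq_or_ne k i with rfl | hki
        · simp only [update_of_ne hkj, update_self]
          omega
        · simp only [update_of_ne hkj, update_of_ne hki]
          exact hT k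
    have := hmin _ hfeas (by rw [sum_update_update (fun _ x => x) T hij]; ring)
    rw [sum_update_update (fun k x => E k x) T hij] at this
    linarith

theorem exists_exchangeOptimal (hE : ∀ i, DiscreteConvexOn a b (E i)) {T₀ : ι → ℤ}
    (hT₀ : ∀ i, a ≤ T₀ i ∧ T₀ i ≤ b) :
    ∃ T : ι → ℤ, (∀ i, a ≤ T i ∧ T i ≤ b) ∧ ∑ i, T i = ∑ i, T₀ i ∧ ExchangeOptimal a b E T := by
  classical
  set S := (Fintype.piFinset fun _ : ι => Icc a b).filter fun T => ∑ i, T i = ∑ i, T₀ i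
  have hmem : ∀ T, T ∈ S ↔ (∀ i, a ≤ T i ∧ T i ≤ b) ∧ ∑ i, T i = ∑ i, T₀ i := by
    simp [S, Fintype.mem_piFinset]
  obtain ⟨T, hTS, hmin⟩ :=
    S.exists_min_image (fun T => ∑ i, E i (T i)) ⟨T₀, (hmem T₀).2 ⟨hT₀, rfl⟩⟩
  obtain ⟨hT, hsum⟩ := (hmem T).1 hTS
  refine ⟨T, hT, hsum, exchangeOptimal_of_minimal hE hT fun T' hT' hsum' => hmin T' ?_⟩
  exact (hmem T').2 ⟨hT', hsum'.trans hsum⟩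

theorem stmt11_general {n : ℕ} (kmin kmax B : ℤ)
    (hB1 : (n : ℤ) * kmin ≤ B) (hB2 : B ≤ (n : ℤ) * kmax)
    (E : Fin n → ℤ → ℝ)
    (hconv : ∀ i : Fin n, ∀ k : ℤ, kmin < k → k < kmax →
      E i (k + 1) + E i (k - 1) ≥ 2 * E i k) :
    (∀ T : Fin n → ℤ, (∀ i, kmin ≤ T i ∧ T i ≤ kmax) → ∑ i, T i = B →
      (∀ i j : Fin n, T i < kmax → kmin < T j →
        E i (T i) - E i (T i + 1) ≤ E j (T j - 1) - E j (T j)) →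
      ∀ T' : Fin n → ℤ, (∀ i, kmin ≤ T' i ∧ T' i ≤ kmax) → ∑ i, T' i = B →
        ∑ i, E i (T i) ≤ ∑ i, E i (T' i)) ∧
    (∃ T : Fin n → ℤ, (∀ i, kmin ≤ T i ∧ T i ≤ kmax) ∧ ∑ i, T i = B ∧
      ∀ i j : Fin n, T i < kmax → kmin < T j →
        E i (T i) - E i (T i + 1) ≤ E j (T j - 1) - E j (T j)) := by
  refine ⟨fun T hT hTB hex T' hT' hT'B =>
    ExchangeOptimal.sum_le_sum hex hconv hT hT' (hTB.trans hT'B.symm), ?_⟩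
  obtain ⟨T₀, hT₀, hT₀B⟩ := exists_fin_sum_eq_of_mul_le_of_le_mul hB1 hB2
  obtain ⟨T, hT, hTB, hex⟩ := exists_exchangeOptimal hconv hT₀
  exact ⟨T, hT, hTB.trans hT₀B, hex⟩

/-- Full optimality of greedy budget allocation: under strict decrease and
discrete convexity of each E i, any feasible allocation satisfying the
exchange-optimality condition is a global minimizer, and such an allocation
exists. -/
theorem stmt11 {n : ℕ} (hn : 1 ≤ n) (kmin kmax B : ℤ) (hk : kmin ≤ kmax)
    (hB1 : (n : ℤ) * kmin ≤ B) (hB2 : B ≤ (n : ℤ) * kmax)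
    (E : Fin n → ℤ → ℝ)
    (hdec : ∀ i : Fin n, ∀ k : ℤ, kmin ≤ k → k < kmax → E i (k + 1) < E i k)
    (hconv : ∀ i : Fin n, ∀ k : ℤ, kmin < k → k < kmax →
      E i (k + 1) + E i (k - 1) ≥ 2 * E i k) :
    (∀ T : Fin n → ℤ, (∀ i, kmin ≤ T i ∧ T i ≤ kmax) → ∑ i, T i = B →
      (∀ i j : Fin n, T i < kmax → kmin < T j →
        E i (T i) - E i (T i + 1) ≤ E j (T j - 1) - E j (T j)) →
      ∀ T' : Fin n → ℤ, (∀ i, kmin ≤ T' i ∧ T' i ≤ kmax) → ∑ i, T' i = B →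
        ∑ i, E i (T i) ≤ ∑ i, E i (T' i)) ∧
    (∃ T : Fin n → ℤ, (∀ i, kmin ≤ T i ∧ T i ≤ kmax) ∧ ∑ i, T i = B ∧
      ∀ i j : Fin n, T i < kmax → kmin < T j →
        E i (T i) - E i (T i + 1) ≤ E j (T j - 1) - E j (T j)) :=
  stmt11_general kmin kmax B hB1 hB2 E hconv
end

section
/- Let E : Fin n → ℤ → ℝ with each E i discretely convex, and let T and T' be two feasible allocations with the same budget B, both satisfying the stationarity condition ΔE_i(T i) ≤ ΔE_j(T j - 1) (resp. with T') for all valid pairs. Then ∑ i, E i (T i) = ∑ i, E i (T' i); that is, all allocations satisfying the exchange-optimality condition achieve the same objective value. -/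
/-- Monotonicity of marginal differences for a discretely convex function. -/
lemma deltaMono (E : ℤ → ℝ) (kmin kmax : ℤ)
    (hconv : ∀ k : ℤ, kmin < k → k < kmax → E (k + 1) + E (k - 1) ≥ 2 * E k)
    (a b : ℤ) (ha : kmin ≤ a) (hab : a ≤ b) (hb : b < kmax) :
    E b - E (b + 1) ≤ E a - E (a + 1) := by
  obtain ⟨m, rfl⟩ : ∃ m : ℕ, b = a + m := ⟨(b - a).toNat, by omega⟩
  induction m with
  | zero => simp
  | succ m ih =>
    have hb' : a + (m : ℤ) < kmax := by push_cast at hb; omega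
    have h1 := hconv (a + m + 1) (by omega) (by push_cast at hb; omega)
    have h2 := ih (by omega) hb'
    have e1 : a + ((m : ℕ) + 1 : ℤ) = a + m + 1 := by ring
    have e2 : a + (m : ℤ) + 1 - 1 = a + (m : ℤ) := by ring
    rw [e2] at h1
    have egoal : (a : ℤ) + ((m + 1 : ℕ) : ℤ) = a + (m : ℤ) + 1 := by push_cast; ring
    rw [egoal]
    nlinarith [h1, h2]

lemma boundUp (E : ℤ → ℝ) (kmin kmax : ℤ) (lam : ℝ)
    (hconv : ∀ k : ℤ, kmin < k → k < kmax → E (k + 1) + E (k - 1) ≥ 2 * E k)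
    (t s : ℤ) (ht : kmin ≤ t) (hts : t ≤ s) (hs : s ≤ kmax)
    (hlam : t < kmax → E t - E (t + 1) ≤ lam) :
    E t - E s ≤ lam * ((s - t : ℤ) : ℝ) := by
  obtain ⟨m, rfl⟩ : ∃ m : ℕ, s = t + m := ⟨(s - t).toNat, by omega⟩
  induction m with
  | zero => simp
  | succ m ih =>
    have hs' : t + (m : ℤ) ≤ kmax := by push_cast at hs; omega
    have ih' := ih (by omega) hs'
    have htk : t < kmax := by push_cast at hs; omega
    have hd := deltaMono E kmin kmax hconv t (t + m) ht (by omega)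
      (by push_cast at hs; omega)
    have hl := hlam htk
    have e1 : (t : ℤ) + ((m + 1 : ℕ) : ℤ) = t + (m : ℤ) + 1 := by push_cast; ring
    rw [e1]
    have e3 : ((t + (m : ℤ) + 1 - t : ℤ) : ℝ) = ((t + (m : ℤ) - t : ℤ) : ℝ) + 1 := by
      push_cast; ring
    rw [e3]
    have e4 : lam * (((t + (m : ℤ) - t : ℤ) : ℝ) + 1)
        = lam * ((t + (m : ℤ) - t : ℤ) : ℝ) + lam := by ring
    rw [e4]
    linarith [ih', hd, hl]

lemma boundDown (E : ℤ → ℝ) (kmin kmax : ℤ) (lam : ℝ)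
    (hconv : ∀ k : ℤ, kmin < k → k < kmax → E (k + 1) + E (k - 1) ≥ 2 * E k)
    (t s : ℤ) (hs : kmin ≤ s) (hst : s ≤ t) (ht : t ≤ kmax)
    (hlam : kmin < t → lam ≤ E (t - 1) - E t) :
    E t - E s ≤ lam * ((s - t : ℤ) : ℝ) := by
  obtain ⟨m, rfl⟩ : ∃ m : ℕ, s = t - m := ⟨(t - s).toNat, by omega⟩
  induction m with
  | zero => simp
  | succ m ih =>
    have hs' : kmin ≤ t - (m : ℤ) := by push_cast at hs; omega
    have ih' := ih hs' (by omega)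
    have htk : kmin < t := by push_cast at hs; omega
    have hl := hlam htk
    have hd := deltaMono E kmin kmax hconv (t - m - 1) (t - 1)
      (by push_cast at hs; omega) (by omega) (by omega)
    have e0 : t - 1 + 1 = t := by ring
    have e2 : t - (m : ℤ) - 1 + 1 = t - (m : ℤ) := by ring
    rw [e0, e2] at hd
    have e1 : (t : ℤ) - ((m + 1 : ℕ) : ℤ) = t - (m : ℤ) - 1 := by push_cast; ring
    rw [e1]
    have e3 : ((t - (m : ℤ) - 1 - t : ℤ) : ℝ) = ((t - (m : ℤ) - t : ℤ) : ℝ) - 1 := by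
      push_cast; ring
    rw [e3]
    have e4 : lam * (((t - (m : ℤ) - t : ℤ) : ℝ) - 1)
        = lam * ((t - (m : ℤ) - t : ℤ) : ℝ) - lam := by ring
    rw [e4]
    linarith [ih', hd, hl]

/-- A stationary feasible allocation is a global minimizer. -/
lemma stationary_opt {n : ℕ} (E : Fin n → ℤ → ℝ) (kmin kmax : ℤ)
    (hconv : ∀ i : Fin n, ∀ k : ℤ, kmin < k → k < kmax →
      E i (k + 1) + E i (k - 1) ≥ 2 * E i k)
    (T S : Fin n → ℤ)
    (hTbox : ∀ i, kmin ≤ T i ∧ T i ≤ kmax)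
    (hSbox : ∀ i, kmin ≤ S i ∧ S i ≤ kmax)
    (hsum : ∑ i, T i = ∑ i, S i)
    (hTstar : ∀ i j : Fin n, T i < kmax → kmin < T j →
      E i (T i) - E i (T i + 1) ≤ E j (T j - 1) - E j (T j)) :
    ∑ i, E i (T i) ≤ ∑ i, E i (S i) := by
  classical
  set A : Finset (Fin n) := Finset.univ.filter (fun i => T i < kmax) with hA
  by_cases hAne : A.Nonempty
  · set lam : ℝ := A.sup' hAne (fun i => E i (T i) - E i (T i + 1)) with hlamdef
    have hup : ∀ i, T i < kmax → E i (T i) - E i (T i + 1) ≤ lam := by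
      intro i hi
      have hmem : i ∈ A := by
        simp only [hA, Finset.mem_filter, Finset.mem_univ, true_and]; exact hi
      exact Finset.le_sup' (fun i => E i (T i) - E i (T i + 1)) hmem
    have hdown : ∀ j, kmin < T j → lam ≤ E j (T j - 1) - E j (T j) := by
      intro j hj
      apply Finset.sup'_le
      intro i hi
      have hi' : T i < kmax := by
        simpa only [hA, Finset.mem_filter, Finset.mem_univ, true_and] using hi
      exact hTstar i j hi' hj
    have key : ∀ i, E i (T i) - E i (S i) ≤ lam * ((S i : ℝ) - T i) := by
      intro i
      rcases le_or_gt (T i) (S i) with h | h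
      · have := boundUp (E i) kmin kmax lam (hconv i) (T i) (S i)
          (hTbox i).1 h (hSbox i).2 (fun hk => hup i hk)
        calc E i (T i) - E i (S i) ≤ lam * ((S i - T i : ℤ) : ℝ) := this
          _ = lam * ((S i : ℝ) - T i) := by push_cast; ring
      · have := boundDown (E i) kmin kmax lam (hconv i) (T i) (S i)
          (hSbox i).1 h.le (hTbox i).2 (fun hk => hdown i hk)
        calc E i (T i) - E i (S i) ≤ lam * ((S i - T i : ℤ) : ℝ) := this
          _ = lam * ((S i : ℝ) - T i) := by push_cast; ring
    have hsumkey : ∑ i, (E i (T i) - E i (S i)) ≤ ∑ i, lam * ((S i : ℝ) - T i) :=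
      Finset.sum_le_sum (fun i _ => key i)
    have hzero : ∑ i, lam * ((S i : ℝ) - T i) = 0 := by
      rw [← Finset.mul_sum]
      have h1 : ((∑ i, S i : ℤ) : ℝ) = ((∑ i, T i : ℤ) : ℝ) := by rw [hsum]
      push_cast at h1
      have h2 : ∑ i, ((S i : ℝ) - T i) = 0 := by
        rw [Finset.sum_sub_distrib]; linarith
      rw [h2, mul_zero]
    rw [Finset.sum_sub_distrib] at hsumkey
    linarith [hsumkey, hzero.le]
  · have hall : ∀ i, T i = kmax := by
      intro i
      by_contra h
      exact hAne ⟨i, by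
        simp only [hA, Finset.mem_filter, Finset.mem_univ, true_and]
        have := (hTbox i).2; omega⟩
    have hST : ∀ i, S i = T i := by
      have hle : ∀ i ∈ Finset.univ, 0 ≤ T i - S i := by
        intro i _; have := (hSbox i).2; rw [hall i]; omega
      have hsz : ∑ i, (T i - S i) = 0 := by rw [Finset.sum_sub_distrib, hsum]; ring
      intro i
      have := (Finset.sum_eq_zero_iff_of_nonneg hle).1 hsz i (Finset.mem_univ i)
      omega
    simp only [hST]
    exact le_refl _

/-- All feasible allocations satisfying the exchange-optimality condition
achieve the same objective value. -/
theorem stmt12 {n : ℕ} (E : Fin n → ℤ → ℝ) (kmin kmax B : ℤ)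
    (hconv : ∀ i : Fin n, ∀ k : ℤ, kmin < k → k < kmax →
      E i (k + 1) + E i (k - 1) ≥ 2 * E i k)
    (T T' : Fin n → ℤ)
    (hTbox : ∀ i, kmin ≤ T i ∧ T i ≤ kmax) (hTsum : ∑ i, T i = B)
    (hT'box : ∀ i, kmin ≤ T' i ∧ T' i ≤ kmax) (hT'sum : ∑ i, T' i = B)
    (hTstar : ∀ i j : Fin n, T i < kmax → kmin < T j →
      E i (T i) - E i (T i + 1) ≤ E j (T j - 1) - E j (T j))
    (hT'star : ∀ i j : Fin n, T' i < kmax → kmin < T' j →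
      E i (T' i) - E i (T' i + 1) ≤ E j (T' j - 1) - E j (T' j)) :
    ∑ i, E i (T i) = ∑ i, E i (T' i) := by
  have h1 := stationary_opt E kmin kmax hconv T T' hTbox hT'box (by rw [hTsum, hT'sum]) hTstar
  have h2 := stationary_opt E kmin kmax hconv T' T hT'box hTbox (by rw [hTsum, hT'sum]) hT'star
  linarith
end
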